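/- Let X₀, X₁ be Banach spaces, m ∈ ℝ, N ∈ ℕ, τ > 0, let (φ_j)_{j≥0} be a dyadic partition of unity on ℝ^n, and let p ∈ C^τ S^m_{1,0}(ℝ^n × ℝ^n, N; 𝓛(X₀, X₁)). Set p_j(x,ξ) = p(x,ξ) φ_j(ξ) and k_j(x,z) = 𝓕⁻¹_{ξ→z}[p_j(x,ξ)]. Then for every multi-index α ∈ ℕ₀^n and every M ∈ {0, …, N} there is a constant C_{α,M} such that ‖∂_z^α k_j(x,z)‖_{𝓛(X₀,X₁)} ≤ C_{α,M} |z|^{−M} 2^{j(n + m + |α| − M)} uniformly in j ∈ ℕ₀, x ∈ ℝ^n and z ≠ 0. -/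

import Mathlib

open MeasureTheory Filter
open scoped Real ENNReal NNReal

noncomputable section

abbrev Vec (n : ℕ) : Type := EuclideanSpace ℝ (Fin n)

/-- Fourier transform of a vector-valued function. -/
def vFourier {n : ℕ} {X : Type*} [NormedAddCommGroup X] [NormedSpace ℂ X]
    (g : Vec n → X) (ξ : Vec n) : X :=
  ∫ x : Vec n, Complex.exp (-(Complex.I * ((inner ℝ x ξ : ℝ) : ℂ))) • g x

/-- Inverse Fourier transform of a vector-valued function. -/
def vFourierInv {n : ℕ} {X : Type*} [NormedAddCommGroup X] [NormedSpace ℂ X]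
    (g : Vec n → X) (x : Vec n) : X :=
  (((2 * Real.pi) ^ n : ℝ) : ℂ)⁻¹ •
    ∫ ξ : Vec n, Complex.exp (Complex.I * ((inner ℝ x ξ : ℝ) : ℂ)) • g ξ

/-- A dyadic (Littlewood–Paley) partition of unity on `ℝ^n`. -/
structure DyadicPartition (n : ℕ) where
  φ : ℕ → Vec n → ℝ
  smooth : ∀ j, ContDiff ℝ (⊤ : ℕ∞) (φ j)
  hasSum_one : ∀ ξ, HasSum (fun j => φ j ξ) 1
  even : ∀ j ξ, φ j (-ξ) = φ j ξ
  supp_zero : tsupport (φ 0) ⊆ Metric.closedBall 0 2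
  supp_succ : ∀ j : ℕ, 1 ≤ j →
    tsupport (φ j) ⊆ {ξ : Vec n | (2 : ℝ) ^ (j - 1) ≤ ‖ξ‖ ∧ ‖ξ‖ ≤ (2 : ℝ) ^ (j + 1)}
  deriv_bound : ∀ k : ℕ, ∃ C : ℝ, ∀ (j : ℕ) (ξ : Vec n),
    ‖iteratedFDeriv ℝ k (φ j) ξ‖ ≤ C * (((2 : ℝ) ^ j)⁻¹) ^ k

/-- `‖f‖_{C^τ} ≤ C` : all derivatives up to order `⌊τ⌋` bounded by `C` and the top
derivatives `(τ - ⌊τ⌋)`-Hölder continuous with constant `C`. -/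
def HolderBoundedBy {E F : Type*} [NormedAddCommGroup E] [NormedSpace ℝ E]
    [NormedAddCommGroup F] [NormedSpace ℝ F] (τ C : ℝ) (f : E → F) : Prop :=
  ContDiff ℝ (⌊τ⌋₊ : ℕ) f ∧
  (∀ k : ℕ, k ≤ ⌊τ⌋₊ → ∀ x, ‖iteratedFDeriv ℝ k f x‖ ≤ C) ∧
  (∀ x y : E, ‖iteratedFDeriv ℝ ⌊τ⌋₊ f x - iteratedFDeriv ℝ ⌊τ⌋₊ f y‖ ≤
    C * ‖x - y‖ ^ (τ - (⌊τ⌋₊ : ℝ)))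

/-- The nonsmooth symbol class `C^τ S^m_{1,0}(ℝ^n × ℝ^n, N; 𝓛(X₀, X₁))`. -/
def SymbolClass {n : ℕ} {X₀ X₁ : Type*} [NormedAddCommGroup X₀] [NormedSpace ℂ X₀]
    [NormedAddCommGroup X₁] [NormedSpace ℂ X₁]
    (τ m : ℝ) (N : ℕ) (p : Vec n → Vec n → (X₀ →L[ℂ] X₁)) : Prop :=
  (∀ x, ContDiff ℝ (N : ℕ) (fun ξ => p x ξ)) ∧
  ∀ a : ℕ, a ≤ N → ∃ C : ℝ, 0 ≤ C ∧ ∀ ξ : Vec n,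
    HolderBoundedBy τ (C * (1 + ‖ξ‖ ^ 2) ^ ((m - a) / 2))
      (fun x => iteratedFDeriv ℝ a (fun ζ => p x ζ) ξ)

/-- Littlewood–Paley projection `φ_i(D) g = 𝓕⁻¹φ_i * g`. -/
def lpProj {n : ℕ} (P : DyadicPartition n) (i : ℕ) {X : Type*} [NormedAddCommGroup X]
    [NormedSpace ℂ X] (g : Vec n → X) : Vec n → X :=
  fun x => ∫ y : Vec n, vFourierInv (fun ξ => ((P.φ i ξ : ℝ) : ℂ)) (x - y) • g y

/-- The pseudodifferential operator `p(x,D)` in oscillatory-integral form. -/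
def psiOp {n : ℕ} {X₀ X₁ : Type*} [NormedAddCommGroup X₀] [NormedSpace ℂ X₀]
    [NormedAddCommGroup X₁] [NormedSpace ℂ X₁]
    (p : Vec n → Vec n → (X₀ →L[ℂ] X₁)) (f : Vec n → X₀) : Vec n → X₁ :=
  fun x => (((2 * Real.pi) ^ n : ℝ) : ℂ)⁻¹ •
    ∫ ξ : Vec n, Complex.exp (Complex.I * ((inner ℝ x ξ : ℝ) : ℂ)) • (p x ξ) (vFourier f ξ)

/-! Substituting `ξ = -2π 2^j η` writes `k_j(x, ·)` as `2^{jn} 𝓕F(2^j ·)`, where `F` is supported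
in the unit ball and its derivatives of order `≤ N` are `O(2^{jm})`: on the support of `φ_j` one
has `⟨ξ⟩ ≈ 2^j`, so by Leibniz every `ξ`-derivative of `φ_j p` gains a factor `2^{-j}`. The
classical decay bound `|w|^M |D^a 𝓕F(w)| ≲ ∑_{k ≤ a, i ≤ M} ∫ |v|^k |D^i F(v)| dv` is then uniform
in `j` and `x`, and undoing the dilation contributes the factor `2^{j(n + a - M)}`. -/

lemma exists_nonneg_forall_le_of_forall_exists {P : ℕ → ℝ → Prop}
    (hP : ∀ b C C', C ≤ C' → P b C → P b C') :
    ∀ N : ℕ, (∀ b ≤ N, ∃ C, 0 ≤ C ∧ P b C) → ∃ C, 0 ≤ C ∧ ∀ b ≤ N, P b C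
  | 0, h => by
    obtain ⟨C, hC0, hC⟩ := h 0 le_rfl
    exact ⟨C, hC0, fun b hb => by rwa [Nat.le_zero.mp hb]⟩
  | N + 1, h => by
    obtain ⟨C, hC0, hC⟩ :=
      exists_nonneg_forall_le_of_forall_exists hP N fun b hb => h b (hb.trans N.le_succ)
    obtain ⟨C', -, hC'⟩ := h (N + 1) le_rfl
    refine ⟨max C C', hC0.trans (le_max_left _ _), fun b hb => ?_⟩
    rcases Nat.le_succ_iff.mp hb with hb | rfl
    · exact hP b _ _ (le_max_left _ _) (hC b hb)
    · exact hP _ _ _ (le_max_right _ _) hC'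

lemma rpow_le_four_rpow_abs_mul_rpow {A t : ℝ} (hA : 0 < A) (hlo : A ≤ 4 * t) (hhi : t ≤ 4 * A)
    (e : ℝ) : t ^ e ≤ 4 ^ |e| * A ^ e := by
  have ht : 0 < t := by linarith
  have hratio : t ^ e = (t / A) ^ e * A ^ e := by
    rw [Real.div_rpow ht.le hA.le, div_mul_cancel₀ _ (Real.rpow_pos_of_pos hA e).ne']
  rw [hratio]
  gcongr
  rcases le_or_gt 0 e with he | he
  · rw [abs_of_nonneg he]
    exact Real.rpow_le_rpow (by positivity) ((div_le_iff₀ hA).mpr hhi) he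
  · rw [abs_of_neg he, ← inv_div, Real.inv_rpow (by positivity), ← Real.rpow_neg (by positivity)]
    exact Real.rpow_le_rpow (by positivity) ((div_le_iff₀ ht).mpr hlo) (by linarith)

lemma le_mul_rpow_neg_mul_two_rpow_of_le {j n a M : ℕ} {m t K D : ℝ} (ht : 0 < t)
    (h : ((2 : ℝ) ^ j) ^ M * (t ^ M * K) ≤ D * ((2 : ℝ) ^ j) ^ m * ((2 : ℝ) ^ j) ^ (n + a)) :
    K ≤ D * t ^ (-(M : ℝ)) * (2 : ℝ) ^ ((j : ℝ) * ((n : ℝ) + m + (a : ℝ) - (M : ℝ))) := by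
  have hA : (0 : ℝ) < 2 ^ j := by positivity
  have hexp : (2 : ℝ) ^ ((j : ℝ) * ((n : ℝ) + m + (a : ℝ) - (M : ℝ))) =
      ((2 : ℝ) ^ j) ^ m * ((2 : ℝ) ^ j) ^ (n + a) / ((2 : ℝ) ^ j) ^ M := by
    rw [Real.rpow_mul (by norm_num), Real.rpow_natCast,
      show (n : ℝ) + m + a - M = m + ((n + a : ℕ) : ℝ) - (M : ℝ) by push_cast; ring,
      Real.rpow_sub hA, Real.rpow_add hA, Real.rpow_natCast, Real.rpow_natCast]
  rw [hexp, Real.rpow_neg ht.le, Real.rpow_natCast]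
  field_simp
  linarith

namespace DyadicPartition

variable {n : ℕ} (P : DyadicPartition n)

lemma norm_le_of_mem_tsupport {j : ℕ} {ξ : Vec n} (hξ : ξ ∈ tsupport (P.φ j)) :
    ‖ξ‖ ≤ 2 ^ (j + 1) := by
  rcases Nat.eq_zero_or_pos j with rfl | hj
  · simpa using P.supp_zero hξ
  · exact (P.supp_succ j hj hξ).2

lemma two_pow_le_four_mul_sqrt {j : ℕ} {ξ : Vec n} (hξ : ξ ∈ tsupport (P.φ j)) :
    (2 : ℝ) ^ j ≤ 4 * √(1 + ‖ξ‖ ^ 2) := by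
  have hnorm : ‖ξ‖ ≤ √(1 + ‖ξ‖ ^ 2) := Real.le_sqrt_of_sq_le (by linarith)
  rcases Nat.eq_zero_or_pos j with rfl | hj
  · have : 1 ≤ √(1 + ‖ξ‖ ^ 2) := Real.le_sqrt_of_sq_le (by nlinarith [sq_nonneg ‖ξ‖])
    simp only [pow_zero]; linarith
  · have h := (P.supp_succ j hj hξ).1
    have h2 : (2 : ℝ) ^ j = 2 * 2 ^ (j - 1) := by rw [← pow_succ', Nat.sub_add_cancel hj]
    nlinarith [pow_pos (two_pos : (0 : ℝ) < 2) (j - 1)]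

lemma sqrt_le_four_mul_two_pow {j : ℕ} {ξ : Vec n} (hξ : ξ ∈ tsupport (P.φ j)) :
    √(1 + ‖ξ‖ ^ 2) ≤ 4 * 2 ^ j := by
  have hsqrt : √(1 + ‖ξ‖ ^ 2) ≤ 1 + ‖ξ‖ :=
    Real.sqrt_le_iff.mpr ⟨by positivity, by nlinarith [norm_nonneg ξ]⟩
  have h := P.norm_le_of_mem_tsupport hξ
  have h1 : (1 : ℝ) ≤ 2 ^ j := one_le_pow₀ (by norm_num)
  rw [pow_succ] at h
  linarith

lemma one_add_sq_rpow_le {j : ℕ} {ξ : Vec n} (hξ : ξ ∈ tsupport (P.φ j)) (e : ℝ) :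
    (1 + ‖ξ‖ ^ 2) ^ (e / 2) ≤ 4 ^ |e| * ((2 : ℝ) ^ j) ^ e := by
  have hsq : (1 + ‖ξ‖ ^ 2) ^ (e / 2) = √(1 + ‖ξ‖ ^ 2) ^ e := by
    rw [Real.sqrt_eq_rpow, ← Real.rpow_mul (by positivity)]
    ring_nf
  rw [hsq]
  exact rpow_le_four_rpow_abs_mul_rpow (by positivity) (P.two_pow_le_four_mul_sqrt hξ)
    (P.sqrt_le_four_mul_two_pow hξ) e

lemma tsupport_smul_subset_closedBall
    {X : Type*} [NormedAddCommGroup X] [NormedSpace ℂ X] (f : Vec n → X) (j : ℕ) :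
    tsupport (fun ξ => ((P.φ j ξ : ℝ) : ℂ) • f ξ) ⊆ Metric.closedBall 0 (2 * π * 2 ^ j) := by
  intro ξ hξ
  have h := P.norm_le_of_mem_tsupport
    (tsupport_comp_subset Complex.ofReal_zero _ (tsupport_smul_subset_left _ _ hξ))
  rw [mem_closedBall_zero_iff]
  rw [pow_succ] at h
  nlinarith [Real.pi_gt_three, pow_pos (two_pos : (0 : ℝ) < 2) j]

end DyadicPartition

namespace SymbolClass

variable {n : ℕ} {X₀ X₁ : Type*} [NormedAddCommGroup X₀] [NormedSpace ℂ X₀]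
  [NormedAddCommGroup X₁] [NormedSpace ℂ X₁] {τ m : ℝ} {N : ℕ}
  {p : Vec n → Vec n → (X₀ →L[ℂ] X₁)}

lemma exists_norm_iteratedFDeriv_le (hp : SymbolClass τ m N p) {b : ℕ} (hb : b ≤ N) :
    ∃ C, 0 ≤ C ∧ ∀ x ξ, ‖iteratedFDeriv ℝ b (p x) ξ‖ ≤ C * (1 + ‖ξ‖ ^ 2) ^ ((m - b) / 2) := by
  obtain ⟨C, hC0, hC⟩ := hp.2 b hb
  refine ⟨C, hC0, fun x ξ => ?_⟩
  simpa using (hC ξ).2.1 0 (Nat.zero_le _) x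

lemma exists_pow_mul_norm_iteratedFDeriv_le (hp : SymbolClass τ m N p) (P : DyadicPartition n) :
    ∃ C, 0 ≤ C ∧ ∀ b ≤ N, ∀ j x ξ, ξ ∈ tsupport (P.φ j) →
      ((2 : ℝ) ^ j) ^ b * ‖iteratedFDeriv ℝ b (p x) ξ‖ ≤ C * ((2 : ℝ) ^ j) ^ m := by
  refine exists_nonneg_forall_le_of_forall_exists
    (fun b C C' hCC' h j x ξ hξ => (h j x ξ hξ).trans (by gcongr)) N fun b hb => ?_
  obtain ⟨C, hC0, hC⟩ := hp.exists_norm_iteratedFDeriv_le hb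
  refine ⟨C * 4 ^ |m - b|, by positivity, fun j x ξ hξ => ?_⟩
  have hA : (0 : ℝ) < 2 ^ j := by positivity
  calc ((2 : ℝ) ^ j) ^ b * ‖iteratedFDeriv ℝ b (p x) ξ‖
      ≤ ((2 : ℝ) ^ j) ^ b * (C * (4 ^ |m - b| * ((2 : ℝ) ^ j) ^ (m - b))) := by
        gcongr
        exact (hC x ξ).trans (by gcongr; exact P.one_add_sq_rpow_le hξ _)
    _ = C * 4 ^ |m - b| * ((2 : ℝ) ^ j) ^ m := by
        rw [Real.rpow_sub hA, Real.rpow_natCast]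
        field_simp

lemma exists_pow_mul_norm_iteratedFDeriv_smul_le (hp : SymbolClass τ m N p)
    (P : DyadicPartition n) :
    ∃ C, 0 ≤ C ∧ ∀ b ≤ N, ∀ j x ξ, ((2 : ℝ) ^ j) ^ b *
      ‖iteratedFDeriv ℝ b (fun ξ => ((P.φ j ξ : ℝ) : ℂ) • p x ξ) ξ‖ ≤ C * ((2 : ℝ) ^ j) ^ m := by
  choose Cφ hCφ using P.deriv_bound
  obtain ⟨Cp, hCp0, hCp⟩ := hp.exists_pow_mul_norm_iteratedFDeriv_le P
  refine exists_nonneg_forall_le_of_forall_exists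
    (fun b C C' hCC' h j x ξ => (h j x ξ).trans (by gcongr)) N fun b hb => ?_
  have hCφ0 : ∀ i, 0 ≤ Cφ i := fun i => by simpa using (norm_nonneg _).trans (hCφ i 0 0)
  refine ⟨∑ i ∈ Finset.range (b + 1), b.choose i * Cφ i * Cp,
    Finset.sum_nonneg fun i _ => by have := hCφ0 i; positivity, fun j x ξ => ?_⟩
  have hφ : ∀ i, ((2 : ℝ) ^ j) ^ i * ‖iteratedFDeriv ℝ i (P.φ j) ξ‖ ≤ Cφ i := fun i => by
    have := hCφ i j ξ
    rw [inv_pow] at this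
    rwa [← le_div_iff₀' (by positivity), div_eq_mul_inv]
  have hreal : (fun ξ => ((P.φ j ξ : ℝ) : ℂ) • p x ξ) = fun ξ => P.φ j ξ • p x ξ :=
    funext fun ξ => Complex.coe_smul _ _
  have hLeibniz := norm_iteratedFDeriv_smul_le ((P.smooth j).of_le (by exact_mod_cast le_top))
    (hp.1 x) ξ (n := b) (by exact_mod_cast hb)
  rw [hreal, Finset.sum_mul]
  calc ((2 : ℝ) ^ j) ^ b * ‖iteratedFDeriv ℝ b (fun ξ => P.φ j ξ • p x ξ) ξ‖
      ≤ ∑ i ∈ Finset.range (b + 1), b.choose i *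
          (((2 : ℝ) ^ j) ^ i * ‖iteratedFDeriv ℝ i (P.φ j) ξ‖) *
          (((2 : ℝ) ^ j) ^ (b - i) * ‖iteratedFDeriv ℝ (b - i) (p x) ξ‖) := by
        refine (mul_le_mul_of_nonneg_left hLeibniz (by positivity)).trans_eq ?_
        rw [Finset.mul_sum]
        refine Finset.sum_congr rfl fun i hi => ?_
        rw [← pow_mul_pow_sub _ (Finset.mem_range_succ_iff.mp hi)]
        ring
    _ ≤ ∑ i ∈ Finset.range (b + 1), b.choose i * Cφ i * Cp * ((2 : ℝ) ^ j) ^ m := by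
        refine Finset.sum_le_sum fun i hi => ?_
        by_cases hξ : ξ ∈ tsupport (P.φ j)
        · rw [mul_assoc _ Cp]
          exact mul_le_mul (mul_le_mul_of_nonneg_left (hφ i) (by positivity))
            (hCp _ ((Nat.sub_le b i).trans hb) j x ξ hξ) (by positivity)
            (mul_nonneg (by positivity) (hCφ0 i))
        · rw [image_eq_zero_of_notMem_tsupport fun h => hξ (tsupport_iteratedFDeriv_subset i h)]
          have := hCφ0 i
          simp only [norm_zero, mul_zero, zero_mul]
          positivity

end SymbolClass

section Fourier

open FourierTransform

variable {V : Type*} [NormedAddCommGroup V] [InnerProductSpace ℝ V] [FiniteDimensional ℝ V]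
  [MeasurableSpace V] [BorelSpace V] {E : Type*} [NormedAddCommGroup E] [NormedSpace ℂ E]

lemma integral_pow_mul_norm_iteratedFDeriv_le {f : V → E}
    (hf : tsupport f ⊆ Metric.closedBall 0 1) (k i : ℕ) {B : ℝ}
    (hB : ∀ v, ‖iteratedFDeriv ℝ i f v‖ ≤ B) :
    ∫ v, ‖v‖ ^ k * ‖iteratedFDeriv ℝ i f v‖ ≤ volume.real (Metric.closedBall (0 : V) 1) * B := by
  have hle : ∀ v, ‖v‖ ^ k * ‖iteratedFDeriv ℝ i f v‖ ≤
      (Metric.closedBall (0 : V) 1).indicator (fun _ => B) v := by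
    intro v
    by_cases hv : v ∈ Metric.closedBall (0 : V) 1
    · rw [Set.indicator_of_mem hv]
      have hv1 : ‖v‖ ≤ 1 := by simpa using hv
      exact (mul_le_of_le_one_left (norm_nonneg _) (pow_le_one₀ (norm_nonneg v) hv1)).trans (hB v)
    · rw [Set.indicator_of_notMem hv,
        image_eq_zero_of_notMem_tsupport fun h => hv (hf (tsupport_iteratedFDeriv_subset i h)),
        norm_zero, mul_zero]
  calc ∫ v, ‖v‖ ^ k * ‖iteratedFDeriv ℝ i f v‖
      ≤ ∫ v, (Metric.closedBall (0 : V) 1).indicator (fun _ => B) v :=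
        integral_mono_of_nonneg (ae_of_all _ fun v => by positivity)
          ((integrable_indicator_iff measurableSet_closedBall).mpr
            (integrableOn_const measure_closedBall_lt_top.ne))
          (ae_of_all _ hle)
    _ = volume.real (Metric.closedBall (0 : V) 1) * B := by
        rw [integral_indicator_const _ measurableSet_closedBall, smul_eq_mul]

lemma integrable_pow_mul_norm_iteratedFDeriv {f : V → E} {M : ℕ} (hf : ContDiff ℝ M f)
    (hcompact : HasCompactSupport f) (k : ℕ) {i : ℕ} (hi : i ≤ M) :
    Integrable (fun v => ‖v‖ ^ k * ‖iteratedFDeriv ℝ i f v‖) :=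
  ((continuous_norm.pow k).mul (hf.continuous_iteratedFDeriv
    (by exact_mod_cast hi)).norm).integrable_of_hasCompactSupport
    (hcompact.iteratedFDeriv i).norm.mul_left

variable (V E) in
lemma exists_pow_mul_norm_iteratedFDeriv_fourier_le (a M : ℕ) :
    ∃ C, 0 ≤ C ∧ ∀ (f : V → E) (B : ℝ), ContDiff ℝ M f → tsupport f ⊆ Metric.closedBall 0 1 →
      (∀ i ≤ M, ∀ v, ‖iteratedFDeriv ℝ i f v‖ ≤ B) →
      ∀ w, ‖w‖ ^ M * ‖iteratedFDeriv ℝ a (𝓕 f) w‖ ≤ C * B := by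
  set K : ℝ := (2 * π) ^ a * (2 * a + 2) ^ M * ((a + 1) * (M + 1))
  refine ⟨K * volume.real (Metric.closedBall (0 : V) 1), by positivity,
    fun f B hf hsupp hB w => ?_⟩
  have hcompact : HasCompactSupport f :=
    (isCompact_closedBall 0 1).of_isClosed_subset (isClosed_tsupport f) hsupp
  have hsum : ∑ q ∈ Finset.range (a + 1) ×ˢ Finset.range (M + 1),
      ∫ v, ‖v‖ ^ q.1 * ‖iteratedFDeriv ℝ q.2 f v‖ ≤
        ((a + 1) * (M + 1)) * (volume.real (Metric.closedBall (0 : V) 1) * B) := by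
    refine (Finset.sum_le_card_nsmul _ _ _ fun q hq => integral_pow_mul_norm_iteratedFDeriv_le
      hsupp q.1 q.2 (hB q.2 (Finset.mem_range_succ_iff.mp (Finset.mem_product.mp hq).2)))
      |>.trans_eq ?_
    simp [nsmul_eq_mul]
  calc ‖w‖ ^ M * ‖iteratedFDeriv ℝ a (𝓕 f) w‖
      ≤ (2 * π) ^ a * (2 * a + 2) ^ M * ∑ q ∈ Finset.range (a + 1) ×ˢ Finset.range (M + 1),
          ∫ v, ‖v‖ ^ q.1 * ‖iteratedFDeriv ℝ q.2 f v‖ :=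
        Real.pow_mul_norm_iteratedFDeriv_fourier_le (K := a) (N := M) hf
          (fun k i _ hi => integrable_pow_mul_norm_iteratedFDeriv hf hcompact k
            (by exact_mod_cast hi)) le_rfl le_rfl w
    _ ≤ (2 * π) ^ a * (2 * a + 2) ^ M *
          (((a + 1) * (M + 1)) * (volume.real (Metric.closedBall (0 : V) 1) * B)) := by
        gcongr
    _ = K * volume.real (Metric.closedBall (0 : V) 1) * B := by ring

end Fourier

section Kernel

open FourierTransform

variable {n : ℕ} {E : Type*} [NormedAddCommGroup E] [NormedSpace ℂ E]

/-- Mathlib's `𝓕` integrates against `e^{-2πi⟪v, w⟫}`, whence the dilation by `-2πA`. -/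
lemma vFourierInv_eq_smul_fourier (g : Vec n → E) {A : ℝ} (hA : 0 < A) (z : Vec n) :
    vFourierInv g z = A ^ n • 𝓕 (fun η => g ((-(2 * π * A)) • η)) (A • z) := by
  set c : ℝ := -(2 * π * A)
  have hc : c < 0 := by simp only [c]; have := Real.pi_pos; nlinarith
  set F : Vec n → E := fun ξ => Complex.exp (Complex.I * ((inner ℝ z ξ : ℝ) : ℂ)) • g ξ
  have hfourier : 𝓕 (fun η => g (c • η)) (A • z) = ((2 * π * A) ^ n)⁻¹ • ∫ ξ, F ξ := by
    have hchar : ∀ η : Vec n, 𝐞 (-(inner ℝ η (A • z))) • g (c • η) = F (c • η) := by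
      intro η
      rw [Circle.smul_def, Real.fourierChar_apply]
      congr 1
      rw [real_inner_smul_right z, real_inner_smul_right η, real_inner_comm z η]
      exact congrArg Complex.exp (by simp only [c]; push_cast; ring)
    rw [Real.fourier_eq, funext hchar, Measure.integral_comp_smul volume F c,
      finrank_euclideanSpace_fin, abs_inv, abs_pow, abs_of_neg hc]
    simp only [c]
    ring_nf
  have hcoef : A ^ n * ((2 * π * A) ^ n)⁻¹ = ((2 * π) ^ n)⁻¹ := by
    rw [mul_pow]
    field_simp
  rw [hfourier, smul_smul, hcoef, vFourierInv, ← Complex.coe_smul, Complex.ofReal_inv]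

variable (n E) in
lemma exists_pow_mul_norm_iteratedFDeriv_vFourierInv_le (a M : ℕ) :
    ∃ C, 0 ≤ C ∧ ∀ (g : Vec n → E) (A B : ℝ), 0 < A → ContDiff ℝ M g →
      tsupport g ⊆ Metric.closedBall 0 (2 * π * A) →
      (∀ i ≤ M, ∀ ξ, A ^ i * ‖iteratedFDeriv ℝ i g ξ‖ ≤ B) →
      ∀ z, A ^ M * (‖z‖ ^ M * ‖iteratedFDeriv ℝ a (vFourierInv g) z‖) ≤ C * B * A ^ (n + a) := by
  obtain ⟨C, hC0, hC⟩ := exists_pow_mul_norm_iteratedFDeriv_fourier_le (Vec n) E a M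
  refine ⟨C * (2 * π) ^ M, by positivity, fun g A B hA hg hsupp hB z => ?_⟩
  have hB0 : 0 ≤ B := by
    have h := hB 0 (Nat.zero_le M) 0
    rw [pow_zero, one_mul] at h
    exact (norm_nonneg _).trans h
  have hc : |-(2 * π * A)| = 2 * π * A := by rw [abs_neg, abs_of_pos (by positivity)]
  set F : Vec n → E := fun η => g ((-(2 * π * A)) • η)
  have hF : ContDiff ℝ M F := hg.comp (contDiff_const_smul _)
  have hFsupp : tsupport F ⊆ Metric.closedBall 0 1 := by
    refine closure_minimal (fun η hη => ?_) Metric.isClosed_closedBall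
    have h := hsupp (subset_tsupport g hη)
    rw [mem_closedBall_zero_iff, norm_smul, Real.norm_eq_abs, hc] at h
    rw [mem_closedBall_zero_iff]
    have : 0 < 2 * π * A := by positivity
    nlinarith
  have hFB : ∀ i ≤ M, ∀ η, ‖iteratedFDeriv ℝ i F η‖ ≤ (2 * π) ^ M * B := by
    intro i hi η
    rw [iteratedFDeriv_comp_const_smul _ (hg.of_le (by exact_mod_cast hi)), norm_smul,
      norm_pow, Real.norm_eq_abs, hc, mul_pow, mul_assoc]
    gcongr
    · linarith [Real.pi_gt_three]
    · exact hB i hi _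
  have hFourier : ContDiff ℝ a (𝓕 F) := Real.contDiff_fourier fun k _ => by
    simpa using integrable_pow_mul_norm_iteratedFDeriv hF
      ((isCompact_closedBall 0 1).of_isClosed_subset (isClosed_tsupport F) hFsupp) k
      (Nat.zero_le M)
  have hderiv : iteratedFDeriv ℝ a (vFourierInv g) z =
      A ^ n • A ^ a • iteratedFDeriv ℝ a (𝓕 F) (A • z) := by
    have hcomp : ContDiff ℝ a fun x => 𝓕 F (A • x) := hFourier.comp (contDiff_const_smul A)
    rw [funext (vFourierInv_eq_smul_fourier g hA),
      iteratedFDeriv_const_smul_apply' hcomp.contDiffAt, iteratedFDeriv_comp_const_smul A hFourier]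
  have hdecay := hC F _ hF hFsupp hFB (A • z)
  rw [norm_smul, Real.norm_eq_abs, abs_of_pos hA, mul_pow] at hdecay
  rw [hderiv, norm_smul, norm_smul, Real.norm_eq_abs, Real.norm_eq_abs, abs_of_pos (pow_pos hA _),
    abs_of_pos (pow_pos hA _)]
  calc A ^ M * (‖z‖ ^ M * (A ^ n * (A ^ a * ‖iteratedFDeriv ℝ a (𝓕 F) (A • z)‖)))
      = A ^ (n + a) * (A ^ M * ‖z‖ ^ M * ‖iteratedFDeriv ℝ a (𝓕 F) (A • z)‖) := by ring
    _ ≤ A ^ (n + a) * (C * ((2 * π) ^ M * B)) := by gcongr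
    _ = C * (2 * π) ^ M * B * A ^ (n + a) := by ring

end Kernel

theorem statement4_general {n : ℕ}
    {X₀ X₁ : Type*} [NormedAddCommGroup X₀] [NormedSpace ℂ X₀]
    [NormedAddCommGroup X₁] [NormedSpace ℂ X₁]
    (m τ : ℝ) (N : ℕ)
    (P : DyadicPartition n)
    (p : Vec n → Vec n → (X₀ →L[ℂ] X₁)) (hp : SymbolClass τ m N p) :
    ∀ (a M : ℕ), M ≤ N → ∃ C : ℝ, 0 ≤ C ∧
      ∀ (j : ℕ) (x z : Vec n), z ≠ 0 →
        ‖iteratedFDeriv ℝ a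
            (fun w : Vec n => vFourierInv (fun ξ => ((P.φ j ξ : ℝ) : ℂ) • p x ξ) w) z‖ ≤
          C * ‖z‖ ^ (-(M : ℝ)) * (2 : ℝ) ^ ((j : ℝ) * ((n : ℝ) + m + (a : ℝ) - (M : ℝ))) := by
  intro a M hM
  obtain ⟨Cg, hCg0, hCg⟩ := hp.exists_pow_mul_norm_iteratedFDeriv_smul_le P
  obtain ⟨C, hC0, hC⟩ := exists_pow_mul_norm_iteratedFDeriv_vFourierInv_le n (X₀ →L[ℂ] X₁) a M
  refine ⟨C * Cg, by positivity, fun j x z hz => le_mul_rpow_neg_mul_two_rpow_of_le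
    (norm_pos_iff.mpr hz) ?_⟩
  have hsmooth : ContDiff ℝ M fun ξ => ((P.φ j ξ : ℝ) : ℂ) • p x ξ := by
    simp_rw [Complex.coe_smul]
    exact ((P.smooth j).of_le (by exact_mod_cast le_top)).smul
      ((hp.1 x).of_le (by exact_mod_cast hM))
  refine (hC _ _ _ (by positivity) hsmooth (P.tsupport_smul_subset_closedBall (p x) j)
    (fun i hi => hCg i (hi.trans hM) j x) z).trans_eq ?_
  ring

/-- Lemma A.2: kernel estimates for the dyadic pieces
`k_j(x,z) = 𝓕⁻¹_{ξ→z}[p(x,ξ)φ_j(ξ)]` of a symbol `p ∈ C^τ S^m_{1,0}(ℝ^n×ℝ^n, N; 𝓛(X₀,X₁))`: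
`‖∂_z^α k_j(x,z)‖ ≤ C_{α,M} |z|^{-M} 2^{j(n+m+|α|-M)}` for all `M ∈ {0,…,N}`. -/
theorem statement4 {n : ℕ} (hn : 1 ≤ n)
    {X₀ X₁ : Type*} [NormedAddCommGroup X₀] [NormedSpace ℂ X₀] [CompleteSpace X₀]
    [NormedAddCommGroup X₁] [NormedSpace ℂ X₁] [CompleteSpace X₁]
    (m τ : ℝ) (hτ : 0 < τ) (N : ℕ) (hN : 1 ≤ N)
    (P : DyadicPartition n)
    (p : Vec n → Vec n → (X₀ →L[ℂ] X₁)) (hp : SymbolClass τ m N p) :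
    ∀ (a M : ℕ), M ≤ N → ∃ C : ℝ, 0 ≤ C ∧
      ∀ (j : ℕ) (x z : Vec n), z ≠ 0 →
        ‖iteratedFDeriv ℝ a
            (fun w : Vec n => vFourierInv (fun ξ => ((P.φ j ξ : ℝ) : ℂ) • p x ξ) w) z‖ ≤
          C * ‖z‖ ^ (-(M : ℝ)) * (2 : ℝ) ^ ((j : ℝ) * ((n : ℝ) + m + (a : ℝ) - (M : ℝ))) :=
  statement4_general m τ N P p hp
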